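/- arXiv:1001.4511 — 3 statements merged into one kernel-verified Lean document; each statement's English description precedes it below -/
import Mathlib

section
/- Let p be a complex polynomial of degree d ≥ 2. Then there exists c ∈ ℂ such that for all n ≥ 1, the sum of (p^n)'(z) over all fixed points z of p^n, each counted according to its multiplicity as a root of the polynomial p^{∘n}(X) − X, equals d^n(d^n − 1) + c^n. -/
/-- The `n`-fold composition `p^{∘n}` of a polynomial with itself
(`p^{∘0} = X`). -/
noncomputable def polyIter (p : Polynomial ℂ) : ℕ → Polynomial ℂ
  | 0 => Polynomial.X
  | n + 1 => (polyIter p n).comp p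

/-!
Write `Ψ h` (`rootsDerivSum h`) for the sum of `h'` over the roots of `h`. For monic split
`h = ∏ₐ (X - a)` of degree `D` we have `h' = ∑ₐ ∏_{b ≠ a} (X - b)`, so the sum of `g` over the
roots of `h` is the coefficient of `X^(D-1)` in `g h' mod h`. For `g = h'` and `D ≥ 2` this gives
`Ψ (h - (s X + u)) = Ψ h + s (D² - 2D)`: writing `h'² = h E + r`, the quotient `E` has degree
at most `D - 2` and `X^(D-2)`-coefficient `D²`. In particular `Ψ (p - u) = Ψ p` for every `u`,
so summing over the fibres of `p` gives `Ψ (g ∘ p) = Ψ p * Ψ g`, hence `Ψ (p^{∘n}) = (Ψ p)^n`.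
Finally the sum of multipliers over the fixed points of `f` is `Ψ (f - X) + D = Ψ f + D (D - 1)`;
take `c = Ψ p`.
-/

open Polynomial

namespace Polynomial

variable {R : Type*} [CommRing R]

theorem mul_derivative_modByMonic_prod_X_sub_C [Nontrivial R] [DecidableEq R]
    (s : Multiset R) (g : R[X]) :
    (g * derivative (s.map (X - C ·)).prod) %ₘ (s.map (X - C ·)).prod =
      (s.map fun a => C (g.eval a) * ((s.erase a).map (X - C ·)).prod).sum := by
  set H := (s.map (X - C ·)).prod
  have hH : H.Monic := monic_multiset_prod_of_monic _ _ fun a _ => monic_X_sub_C a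
  refine (div_modByMonic_unique (s.map fun a => g /ₘ (X - C a)).sum _ hH ⟨?_, ?_⟩).2
  · have hsplit : ∀ a ∈ s, g * ((s.erase a).map (X - C ·)).prod =
        C (g.eval a) * ((s.erase a).map (X - C ·)).prod + H * (g /ₘ (X - C a)) := by
      intro a ha
      rw [show H = (X - C a) * ((s.erase a).map (X - C ·)).prod from
        (Multiset.prod_map_erase ha).symm]
      nth_rw 1 [← modByMonic_add_div g (X - C a), modByMonic_X_sub_C_eq_C_eval]
      ring
    rw [derivative_prod, ← Multiset.sum_map_mul_left, ← Multiset.sum_map_mul_left]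
    simp only [derivative_X_sub_C, mul_one]
    rw [Multiset.map_congr rfl hsplit, Multiset.sum_map_add]
  · rw [degree_eq_natDegree hH.ne_zero, natDegree_multiset_prod_X_sub_C_eq_card, ← mem_degreeLT]
    refine multiset_sum_mem _ fun q hq => ?_
    obtain ⟨a, ha, rfl⟩ := Multiset.mem_map.mp hq
    rw [mem_degreeLT]
    refine degree_le_natDegree.trans_lt (Nat.cast_lt.mpr ?_)
    calc (C (g.eval a) * ((s.erase a).map (X - C ·)).prod).natDegree
        ≤ ((s.erase a).map (X - C ·)).prod.natDegree := natDegree_C_mul_le _ _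
      _ < Multiset.card s := by
        rw [natDegree_multiset_prod_X_sub_C_eq_card]
        exact Multiset.card_erase_lt_of_mem ha

theorem Splits.sum_roots_eval_eq_coeff_modByMonic [IsDomain R] {h : R[X]} (hs : h.Splits)
    (hm : h.Monic) (g : R[X]) :
    (h.roots.map g.eval).sum = ((g * derivative h) %ₘ h).coeff (h.natDegree - 1) := by
  classical
  have hcard : Multiset.card h.roots = h.natDegree := splits_iff_card_roots.mp hs
  have hrem := mul_derivative_modByMonic_prod_X_sub_C h.roots g
  rw [← hs.eq_prod_roots_of_monic hm] at hrem
  rw [hrem, ← hcard, ← lcoeff_apply, map_multiset_sum, Multiset.map_map]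
  refine congrArg Multiset.sum (Multiset.map_congr rfl fun a ha => ?_)
  have hmonic : ((h.roots.erase a).map (X - C ·)).prod.Monic :=
    monic_multiset_prod_of_monic _ _ fun b _ => monic_X_sub_C b
  have hdeg : ((h.roots.erase a).map (X - C ·)).prod.natDegree = Multiset.card h.roots - 1 := by
    rw [natDegree_multiset_prod_X_sub_C_eq_card, Multiset.card_erase_of_mem ha, Nat.pred_eq_sub_one]
  simp only [Function.comp_apply, lcoeff_apply, coeff_C_mul, ← hdeg, hmonic.coeff_natDegree,
    mul_one]

noncomputable def rootsDerivSum [IsDomain R] (h : R[X]) : R :=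
  (h.roots.map (derivative h).eval).sum

@[simp]
theorem rootsDerivSum_X [IsDomain R] : rootsDerivSum (X : R[X]) = 1 := by
  simp [rootsDerivSum]

theorem rootsDerivSum_C_mul [IsDomain R] (h : R[X]) {a : R} (ha : a ≠ 0) :
    rootsDerivSum (C a * h) = a * rootsDerivSum h := by
  simp only [rootsDerivSum, roots_C_mul _ ha, derivative_C_mul, eval_mul, eval_C,
    Multiset.sum_map_mul_left]

theorem Monic.natDegree_derivative_sq_divByMonic_le {h : R[X]} (hm : h.Monic) :
    (derivative h * derivative h /ₘ h).natDegree ≤ h.natDegree - 2 := by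
  rw [natDegree_divByMonic _ hm]
  have := (natDegree_mul_le (p := derivative h) (q := derivative h)).trans
    (add_le_add (natDegree_derivative_le h) (natDegree_derivative_le h))
  omega

theorem Monic.coeff_derivative_natDegree_sub_one {h : R[X]} (hm : h.Monic) (hd : 0 < h.natDegree) :
    (derivative h).coeff (h.natDegree - 1) = h.natDegree := by
  rw [coeff_derivative, Nat.sub_add_cancel hd, hm.coeff_natDegree, one_mul, ← Nat.cast_add_one,
    Nat.sub_add_cancel hd]

theorem Monic.coeff_derivative_sq_divByMonic {h : R[X]} (hm : h.Monic) (hd : 2 ≤ h.natDegree) :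
    (derivative h * derivative h /ₘ h).coeff (h.natDegree - 2) = (h.natDegree : R) ^ 2 := by
  have hne : h ≠ 1 := by rintro rfl; simp at hd
  set D := h.natDegree
  have hlead : (derivative h).coeff (D - 1) = D := hm.coeff_derivative_natDegree_sub_one (by omega)
  have htop := congrArg (coeff · (D - 1 + (D - 1)))
    (modByMonic_add_div (derivative h * derivative h) h)
  simp only [coeff_add] at htop
  rw [coeff_mul_add_eq_of_natDegree_le (natDegree_derivative_le h) (natDegree_derivative_le h),
    hlead, show D - 1 + (D - 1) = D + (D - 2) by omega,
    coeff_mul_add_eq_of_natDegree_le le_rfl hm.natDegree_derivative_sq_divByMonic_le,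
    hm.coeff_natDegree, one_mul,
    coeff_eq_zero_of_natDegree_lt ((natDegree_modByMonic_lt _ hm hne).trans_le (by omega)),
    zero_add] at htop
  rw [htop, sq]

theorem Splits.roots_comp [IsDomain R] {g : R[X]} (hs : g.Splits) {p : R[X]}
    (hp : 0 < p.natDegree) : (g.comp p).roots = g.roots.bind fun u => (p - C u).roots := by
  rcases eq_or_ne g 0 with rfl | hg
  · simp
  have hpu : ∀ u, p - C u ≠ 0 := fun u h0 => by
    rw [← natDegree_sub_C (a := u), h0, natDegree_zero] at hp
    exact hp.false
  conv_lhs => rw [hs.eq_prod_roots]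
  rw [mul_comp, C_comp, multiset_prod_comp, roots_C_mul _ (leadingCoeff_ne_zero.mpr hg),
    roots_multiset_prod, Multiset.bind_map, Multiset.bind_map]
  · simp [sub_comp]
  · simp [Multiset.mem_map, hpu]

section IsAlgClosed

variable {K : Type*} [Field K] [IsAlgClosed K]

theorem Monic.rootsDerivSum_sub_linear {h : K[X]} (hm : h.Monic) (hd : 2 ≤ h.natDegree)
    (s u : K) :
    rootsDerivSum (h - (C s * X + C u)) =
      rootsDerivSum h + s * ((h.natDegree : K) ^ 2 - 2 * h.natDegree) := by
  have hne : h ≠ 1 := by rintro rfl; simp at hd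
  set D := h.natDegree with hD
  have hlin : (C s * X + C u).degree < h.degree := by
    rw [degree_eq_natDegree hm.ne_zero]
    exact degree_linear_le.trans_lt (by exact_mod_cast (by omega : 1 < D))
  have hm' : (h - (C s * X + C u)).Monic := hm.sub_of_left hlin
  have hD' : (h - (C s * X + C u)).natDegree = D :=
    natDegree_eq_of_degree_eq (degree_sub_eq_left_of_degree_lt hlin)
  set E := derivative h * derivative h /ₘ h
  set r := derivative h * derivative h %ₘ h
  have hE : E.natDegree ≤ D - 2 := hm.natDegree_derivative_sq_divByMonic_le
  have hdiv : r + h * E = derivative h * derivative h := modByMonic_add_div _ _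
  have hmod : (derivative (h - (C s * X + C u)) * derivative (h - (C s * X + C u))) %ₘ
      (h - (C s * X + C u)) = r + (C s * X + C u) * E - C (2 * s) * derivative h + C (s ^ 2) := by
    refine (div_modByMonic_unique E _ hm' ⟨?_, ?_⟩).2
    · simp only [derivative_sub, derivative_add, derivative_C_mul_X, derivative_C, add_zero,
        C_mul, C_pow, map_ofNat]
      linear_combination hdiv
    · rw [degree_eq_natDegree hm'.ne_zero, hD']
      refine degree_le_natDegree.trans_lt (Nat.cast_lt.mpr ?_)
      have hr : r.natDegree < D := natDegree_modByMonic_lt _ hm hne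
      have hlinE : ((C s * X + C u) * E).natDegree < D :=
        natDegree_mul_le.trans_lt (by have := natDegree_linear_le (a := s) (b := u); omega)
      have hder : (C (2 * s) * derivative h).natDegree < D :=
        (natDegree_C_mul_le _ _).trans_lt ((natDegree_derivative_le h).trans_lt (by omega))
      refine (natDegree_add_le _ _).trans_lt (max_lt ?_ (by rw [natDegree_C]; omega))
      refine (natDegree_sub_le _ _).trans_lt (max_lt ?_ hder)
      exact (natDegree_add_le _ _).trans_lt (max_lt hr hlinE)
  unfold rootsDerivSum
  rw [(IsAlgClosed.splits _).sum_roots_eval_eq_coeff_modByMonic hm',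
    (IsAlgClosed.splits _).sum_roots_eval_eq_coeff_modByMonic hm, hmod, hD', ← hD]
  have hlead : (derivative h).coeff (D - 1) = D := hm.coeff_derivative_natDegree_sub_one (by omega)
  have hXE : (X * E).coeff (D - 1) = (D : K) ^ 2 := by
    rw [show D - 1 = D - 2 + 1 by omega, coeff_X_mul, hm.coeff_derivative_sq_divByMonic hd]
  have hE1 : E.coeff (D - 1) = 0 := coeff_eq_zero_of_natDegree_lt (by omega)
  simp only [coeff_add, coeff_sub, add_mul, mul_assoc, coeff_C_mul, hXE, hE1,
    hlead, coeff_C, if_neg (by omega : D - 1 ≠ 0)]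
  ring

theorem rootsDerivSum_sub_linear {h : K[X]} (hd : 2 ≤ h.natDegree) (s u : K) :
    rootsDerivSum (h - (C s * X + C u)) =
      rootsDerivSum h + s * ((h.natDegree : K) ^ 2 - 2 * h.natDegree) := by
  have h0 : h ≠ 0 := by rintro rfl; simp at hd
  have ha : h.leadingCoeff ≠ 0 := leadingCoeff_ne_zero.mpr h0
  set a := h.leadingCoeff
  set m := C a⁻¹ * h
  have hm : m.Monic := by simpa only [m, mul_comm] using monic_mul_leadingCoeff_inv h0
  have hh : h = C a * m := by simp [m, ← mul_assoc, ← C_mul, mul_inv_cancel₀ ha]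
  have hmd : m.natDegree = h.natDegree := natDegree_C_mul (inv_ne_zero ha)
  have hq : h - (C s * X + C u) = C a * (m - (C (a⁻¹ * s) * X + C (a⁻¹ * u))) := by
    rw [mul_sub, ← hh, mul_add, ← mul_assoc, ← C_mul, ← C_mul, mul_inv_cancel_left₀ ha,
      mul_inv_cancel_left₀ ha]
  rw [hq, rootsDerivSum_C_mul _ ha, hm.rootsDerivSum_sub_linear (hmd ▸ hd), hmd, hh,
    rootsDerivSum_C_mul _ ha]
  field_simp

theorem rootsDerivSum_sub_C {h : K[X]} (hd : 2 ≤ h.natDegree) (u : K) :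
    rootsDerivSum (h - C u) = rootsDerivSum h := by
  simpa using rootsDerivSum_sub_linear hd 0 u

theorem sum_roots_sub_X_eval_derivative {f : K[X]} (hd : 2 ≤ f.natDegree) :
    ((f - X).roots.map (derivative f).eval).sum =
      rootsDerivSum f + f.natDegree * ((f.natDegree : K) - 1) := by
  have hshift := rootsDerivSum_sub_linear hd 1 0
  simp only [map_one, one_mul, map_zero, add_zero] at hshift
  have hcard : Multiset.card (f - X).roots = f.natDegree := by
    rw [splits_iff_card_roots.mp (IsAlgClosed.splits _)]
    exact natDegree_sub_eq_left_of_natDegree_lt (natDegree_X_le.trans_lt (by omega))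
  calc ((f - X).roots.map (derivative f).eval).sum
      = ((f - X).roots.map fun z => (derivative (f - X)).eval z + 1).sum := by simp
    _ = rootsDerivSum (f - X) + (f.natDegree : K) := by
      rw [Multiset.sum_map_add, Multiset.map_const', Multiset.sum_replicate, hcard, nsmul_one]
      rfl
    _ = rootsDerivSum f + f.natDegree * ((f.natDegree : K) - 1) := by rw [hshift]; ring

theorem rootsDerivSum_comp (g : K[X]) {p : K[X]} (hp : 2 ≤ p.natDegree) :
    rootsDerivSum (g.comp p) = rootsDerivSum p * rootsDerivSum g := by
  have hfiber : ∀ u, ((p - C u).roots.map (derivative (g.comp p)).eval).sum =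
      rootsDerivSum p * (derivative g).eval u := fun u => by
    rw [← rootsDerivSum_sub_C hp u, rootsDerivSum, mul_comm, ← Multiset.sum_map_mul_left]
    refine congrArg Multiset.sum (Multiset.map_congr rfl fun z hz => ?_)
    have hpz : p.eval z = u := by
      simpa [sub_eq_zero] using isRoot_of_mem_roots hz
    simp [derivative_comp, eval_comp, hpz, mul_comm]
  rw [rootsDerivSum, (IsAlgClosed.splits g).roots_comp (by omega), Multiset.map_bind,
    Multiset.sum_bind, Multiset.map_congr rfl fun u _ => hfiber u, Multiset.sum_map_mul_left]
  rfl

end IsAlgClosed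

end Polynomial

theorem natDegree_polyIter (p : ℂ[X]) (n : ℕ) : (polyIter p n).natDegree = p.natDegree ^ n := by
  induction n with
  | zero => simp [polyIter]
  | succ n ih => rw [polyIter, natDegree_comp, ih, pow_succ]

theorem eval_derivative_polyIter (p : ℂ[X]) (n : ℕ) (z : ℂ) :
    (derivative (polyIter p n)).eval z =
      ∏ k ∈ Finset.range n, (derivative p).eval ((fun w => p.eval w)^[k] z) := by
  induction n generalizing z with
  | zero => simp [polyIter]
  | succ n ih =>
    rw [polyIter, derivative_comp, eval_mul, eval_comp, ih, Finset.prod_range_succ', mul_comm]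
    simp only [Function.iterate_succ_apply, Function.iterate_zero_apply]

theorem rootsDerivSum_polyIter {p : ℂ[X]} (hp : 2 ≤ p.natDegree) (n : ℕ) :
    rootsDerivSum (polyIter p n) = rootsDerivSum p ^ n := by
  induction n with
  | zero => simp [polyIter]
  | succ n ih => rw [polyIter, rootsDerivSum_comp _ hp, ih, pow_succ, mul_comm]

theorem stmt_8 (p : Polynomial ℂ) (hp : 2 ≤ p.natDegree) :
    ∃ c : ℂ, ∀ n : ℕ, 1 ≤ n →
      ((polyIter p n - Polynomial.X).roots.map
        (fun z => ∏ k ∈ Finset.range n,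
          p.derivative.eval ((fun w => p.eval w)^[k] z))).sum
      = (p.natDegree : ℂ) ^ n * ((p.natDegree : ℂ) ^ n - 1) + c ^ n := by
  refine ⟨rootsDerivSum p, fun n hn => ?_⟩
  have hd : 2 ≤ (polyIter p n).natDegree := by
    rw [natDegree_polyIter]
    exact hp.trans (Nat.le_self_pow (by omega) _)
  simp_rw [← eval_derivative_polyIter]
  rw [sum_roots_sub_X_eval_derivative hd, rootsDerivSum_polyIter hp, natDegree_polyIter]
  push_cast
  ring
end

section
/- Let p be a complex polynomial of degree 2 such that |p'(ξ)| < 2 for every fixed point ξ of p. Then p² has a fixed point ξ satisfying |(p²)'(ξ)| > 4; that is, there exists ξ ∈ ℂ with p(p(ξ)) = ξ and |p'(p(ξ)) · p'(ξ)| > 4. -/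
/-!
Write `p = a X² + b X + d` and let `t² = (b - 1)² - 4ad` be the discriminant of the fixed-point
equation. The two fixed points have multipliers `1 + t` and `1 - t`, while the roots of the
quotient `(p(p(z)) - z) / (p(z) - z)` form a 2-cycle of multiplier `5 - t²`. If `|1 ± t| < 2`
then `|Re t| < 1`, so `Re (5 - t²) = 5 - (Re t)² + (Im t)² > 4`.
-/

open Polynomial

namespace Polynomial

section CommSemiring

variable {R : Type*} [CommSemiring R] {p : R[X]}

theorem coeff_two_ne_zero_of_natDegree_eq_two (hp : p.natDegree = 2) : p.coeff 2 ≠ 0 :=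
  coeff_ne_zero_of_eq_degree ((degree_eq_iff_natDegree_eq_of_pos two_pos).mpr hp)

theorem eval_of_natDegree_le_two (hp : p.natDegree ≤ 2) (z : R) :
    p.eval z = p.coeff 2 * z ^ 2 + p.coeff 1 * z + p.coeff 0 := by
  rw [eval_eq_sum_range' (n := 3) (by omega)]
  simp only [Finset.sum_range_succ, Finset.sum_range_zero]
  ring

theorem eval_derivative_of_natDegree_le_two (hp : p.natDegree ≤ 2) (z : R) :
    p.derivative.eval z = 2 * p.coeff 2 * z + p.coeff 1 := by
  rw [eval_eq_sum_range' (n := 2) (by have := natDegree_derivative_le p; omega)]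
  simp only [Finset.sum_range_succ, Finset.sum_range_zero, coeff_derivative]
  push_cast
  ring

end CommSemiring

section Field

variable {K : Type*} [Field K] [NeZero (2 : K)] {p : K[X]}

theorem exists_eval_eq_self_and_derivative_eval_eq (hp : p.natDegree = 2) {t : K}
    (ht : discrim (p.coeff 2) (p.coeff 1 - 1) (p.coeff 0) = t * t) :
    ∃ ξ, p.eval ξ = ξ ∧ p.derivative.eval ξ = 1 + t := by
  have ha := coeff_two_ne_zero_of_natDegree_eq_two hp
  refine ⟨(1 - p.coeff 1 + t) / (2 * p.coeff 2), ?_, ?_⟩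
  · rw [eval_of_natDegree_le_two hp.le]
    field_simp
    rw [discrim] at ht
    linear_combination -ht
  · rw [eval_derivative_of_natDegree_le_two hp.le]
    field_simp
    ring

theorem exists_eval_eval_eq_self_and_derivative_mul_eq [IsAlgClosed K] (hp : p.natDegree = 2)
    {t : K} (ht : discrim (p.coeff 2) (p.coeff 1 - 1) (p.coeff 0) = t * t) :
    ∃ γ, p.eval (p.eval γ) = γ ∧
      p.derivative.eval (p.eval γ) * p.derivative.eval γ = 5 - t ^ 2 := by
  have ha := coeff_two_ne_zero_of_natDegree_eq_two hp
  set a := p.coeff 2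
  set b := p.coeff 1
  set d := p.coeff 0
  -- `a²z² + a(b+1)z + (ad+b+1)` is the quotient `(p(p(z)) - z) / (p(z) - z)`.
  obtain ⟨γ, hγ⟩ := exists_quadratic_eq_zero (b := a * (b + 1)) (c := a * d + b + 1)
    (pow_ne_zero 2 ha) (IsAlgClosed.exists_eq_mul_self _)
  refine ⟨γ, ?_, ?_⟩
  · simp only [eval_of_natDegree_le_two hp.le]
    linear_combination (a * γ ^ 2 + (b - 1) * γ + d) * hγ
  · simp only [eval_of_natDegree_le_two hp.le, eval_derivative_of_natDegree_le_two hp.le]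
    rw [discrim] at ht
    linear_combination (4 * a * γ + 2 * b - 4) * hγ - ht

end Field

end Polynomial

theorem Complex.four_lt_norm_five_sub_sq {t : ℂ} (h₁ : ‖1 + t‖ < 2) (h₂ : ‖1 - t‖ < 2) :
    4 < ‖5 - t ^ 2‖ := by
  have hre₁ : |1 + t.re| < 2 := by simpa using (abs_re_le_norm (1 + t)).trans_lt h₁
  have hre₂ : |1 - t.re| < 2 := by simpa using (abs_re_le_norm (1 - t)).trans_lt h₂
  have hre : t.re ^ 2 < 1 := by
    rw [abs_lt] at hre₁ hre₂
    nlinarith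
  calc 4 < 5 - t.re ^ 2 + t.im ^ 2 := by linarith [sq_nonneg t.im]
    _ = (5 - t ^ 2).re := by simp [sq]; ring
    _ ≤ ‖5 - t ^ 2‖ := re_le_norm _

theorem stmt_10 (p : Polynomial ℂ) (hp : p.natDegree = 2)
    (h : ∀ ξ : ℂ, p.eval ξ = ξ → ‖p.derivative.eval ξ‖ < 2) :
    ∃ ξ : ℂ, p.eval (p.eval ξ) = ξ ∧
      4 < ‖p.derivative.eval (p.eval ξ) * p.derivative.eval ξ‖ := by
  obtain ⟨t, ht⟩ :=
    IsAlgClosed.exists_eq_mul_self (discrim (p.coeff 2) (p.coeff 1 - 1) (p.coeff 0))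
  obtain ⟨ξ₁, hξ₁, hmul₁⟩ := exists_eval_eq_self_and_derivative_eval_eq hp ht
  obtain ⟨ξ₂, hξ₂, hmul₂⟩ :=
    exists_eval_eq_self_and_derivative_eval_eq hp (t := -t) (by rw [ht, neg_mul_neg])
  obtain ⟨γ, hγ, hmul⟩ := exists_eval_eval_eq_self_and_derivative_mul_eq hp ht
  refine ⟨γ, hγ, hmul ▸ Complex.four_lt_norm_five_sub_sq ?_ ?_⟩
  · simpa [hmul₁] using h ξ₁ hξ₁
  · simpa [hmul₂, sub_eq_add_neg] using h ξ₂ hξ₂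
end

section
/- Let d ≥ 2 be an integer and let c ∈ ℂ satisfy |d(d−1) + c| < 2d. Then Re(c²) > (1/2) d²(d−1)² − 4d². Consequently, if in addition |d²(d²−1) + c²| < 4d², then d = 2. -/
/-!
Write `c = x + iy` and `a = d(d-1)`. The hypothesis gives `y² < 4d² - (a + x)²`, so
`Re(c²) = x² - y² > x² + (a + x)² - 4d² ≥ a²/2 - 4d²`, the last step by minimising over `x`.
If also `|d²(d²-1) + c²| < 4d²`, taking real parts gives `d²(d²-1) + Re(c²) < 4d²`, which together
with the first bound forces `(d²-1) + (d-1)²/2 < 8`, impossible for `d ≥ 3`.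
-/

namespace Complex

theorem half_sq_sub_sq_lt_re_sq_of_norm_ofReal_add_lt {a r : ℝ} {z : ℂ} (h : ‖(a : ℂ) + z‖ < r) :
    a ^ 2 / 2 - r ^ 2 < (z ^ 2).re := by
  have hsq : ‖(a : ℂ) + z‖ ^ 2 < r ^ 2 := by
    have := norm_nonneg ((a : ℂ) + z)
    nlinarith
  rw [Complex.sq_norm, normSq_apply] at hsq
  simp only [add_re, add_im, ofReal_re, ofReal_im, zero_add] at hsq
  have hre : (z ^ 2).re = z.re * z.re - z.im * z.im := by simp [pow_two, mul_re]
  rw [hre]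
  nlinarith [sq_nonneg (z.re + a / 2)]

theorem re_add_le_norm_ofReal_add (a : ℝ) (z : ℂ) : a + z.re ≤ ‖(a : ℂ) + z‖ := by
  simpa using re_le_norm ((a : ℂ) + z)

end Complex

theorem stmt_11 (d : ℕ) (hd : 2 ≤ d) (c : ℂ)
    (h1 : ‖(d : ℂ) * ((d : ℂ) - 1) + c‖ < 2 * d) :
    (1 / 2 : ℝ) * (d : ℝ) ^ 2 * ((d : ℝ) - 1) ^ 2 - 4 * (d : ℝ) ^ 2 < (c ^ 2).re ∧
      (‖(d : ℂ) ^ 2 * ((d : ℂ) ^ 2 - 1) + c ^ 2‖ < 4 * (d : ℝ) ^ 2 →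
        d = 2) := by
  have hre : (1 / 2 : ℝ) * (d : ℝ) ^ 2 * ((d : ℝ) - 1) ^ 2 - 4 * (d : ℝ) ^ 2 < (c ^ 2).re := by
    have h := Complex.half_sq_sub_sq_lt_re_sq_of_norm_ofReal_add_lt (a := (d : ℝ) * ((d : ℝ) - 1))
      (r := 2 * d) (z := c) (by push_cast; exact h1)
    linarith
  refine ⟨hre, fun h2 => ?_⟩
  have hsum : (d : ℝ) ^ 2 * ((d : ℝ) ^ 2 - 1) + (c ^ 2).re < 4 * (d : ℝ) ^ 2 :=
    (Complex.re_add_le_norm_ofReal_add ((d : ℝ) ^ 2 * ((d : ℝ) ^ 2 - 1)) (c ^ 2)).trans_lt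
      (by push_cast; exact h2)
  by_contra hne
  have h3 : (3 : ℝ) ≤ d := by exact_mod_cast (show 3 ≤ d by omega)
  nlinarith [mul_nonneg (sq_nonneg (d : ℝ)) (sub_nonneg.mpr h3)]
end
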